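/- Let F be a weakly convex sparseness measure, J(x) = Σ_{i=1}^N F(x_i), A ∈ ℝ^{M×N}, and K ≥ 1. Then for every γ ≥ 0 the following are equivalent: (i) J(z_S) ≤ γ·J(z_{S^c}) for every z ∈ ker A and every index set S with #S ≤ K; (ii) ‖z_S‖₁ ≤ γ·‖z_{S^c}‖₁ for every z ∈ ker A and every index set S with #S ≤ K. Consequently the null space constant of J equals that of the ℓ1 norm: γ(J,A,K) = γ(ℓ1,A,K). -/

import Mathlib

open Filter Set

/-- Weak convexity on `[0,∞)` with parameter `ρ`. -/
def WeaklyConvexOnNonneg (F : ℝ → ℝ) (ρ : ℝ) : Prop :=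
  ∀ t₁ t₂ : ℝ, 0 ≤ t₁ → 0 ≤ t₂ → ∀ l : ℝ, 0 ≤ l → l ≤ 1 →
    F (l * t₁ + (1 - l) * t₂) ≤
      l * F t₁ + (1 - l) * F t₂ - ρ * l * (1 - l) * (t₁ - t₂) ^ 2

/-- `F` is a weakly convex sparseness measure with weak-convexity parameter `ρ ≤ 0`. -/
structure IsWCSM (F : ℝ → ℝ) (ρ : ℝ) : Prop where
  zero : F 0 = 0
  even : ∀ t, F (-t) = F t
  nontrivial : ∃ t, F t ≠ 0
  mono : ∀ s t : ℝ, 0 ≤ s → s ≤ t → F s ≤ F t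
  ratio_anti : ∀ s t : ℝ, 0 < s → s ≤ t → F t / t ≤ F s / s
  rho_nonpos : ρ ≤ 0
  wconv : WeaklyConvexOnNonneg F ρ

/-- `α = lim_{t→0⁺} F(t)/t`, finite and positive, with `F(t) ≤ α|t|` for all `t`. -/
def IsAlpha (F : ℝ → ℝ) (α : ℝ) : Prop :=
  0 < α ∧ Tendsto (fun t => F t / t) (nhdsWithin 0 (Set.Ioi 0)) (nhds α) ∧
    ∀ t : ℝ, F t ≤ α * |t|

/-- The generalized gradient set `∂F(t)`; by convention `∂F(0) = {0}`. -/
noncomputable def genGrad (F : ℝ → ℝ) (t : ℝ) : Set ℝ :=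
  if t = 0 then {0}
  else {f : ℝ | ∀ ν : ℝ,
    ν * f ≤ Filter.limsup (fun θ => (F (t + θ * ν) - F t) / θ) (nhdsWithin 0 (Set.Ioi 0))}

/-- Euclidean (`ℓ2`) norm of a vector. -/
noncomputable def l2 {n : ℕ} (x : Fin n → ℝ) : ℝ := Real.sqrt (∑ i, (x i) ^ 2)

/-- `ℓ1` norm of a vector. -/
def l1 {n : ℕ} (x : Fin n → ℝ) : ℝ := ∑ i, |x i|

/-- `ℓ0` "norm": number of nonzero entries. -/
noncomputable def l0 {n : ℕ} (x : Fin n → ℝ) : ℕ :=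
  (Finset.univ.filter (fun i => x i ≠ 0)).card

/-- `z_S`: the vector equal to `z` on `S` and zero elsewhere. -/
def restr {n : ℕ} (x : Fin n → ℝ) (S : Finset (Fin n)) : Fin n → ℝ :=
  fun i => if i ∈ S then x i else 0

/-- `γ` is a null-space-constant bound for `(J, A, K)`. -/
def NSCBound {M N : ℕ} (J : (Fin N → ℝ) → ℝ) (A : Matrix (Fin M) (Fin N) ℝ)
    (K : ℕ) (γ : ℝ) : Prop :=
  ∀ z : Fin N → ℝ, A.mulVec z = 0 → ∀ S : Finset (Fin N), S.card ≤ K →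
    J (restr z S) ≤ γ * J (restr z Sᶜ)

/-- Spectral norm (`ℓ2`-operator norm) of a matrix. -/
noncomputable def opNorm2 {m n : ℕ} (A : Matrix (Fin m) (Fin n) ℝ) : ℝ :=
  sSup {c : ℝ | ∃ v : Fin n → ℝ, l2 v ≤ 1 ∧ c = l2 (A.mulVec v)}

/-!
For `t > 0` the slope `F t / t` is non-increasing, and weak convexity bounds it near `0`, so it
has a finite positive limit `α` as `t → 0⁺`. Scaling a null-space vector by `t → 0⁺` turns the
inequality for `J` into `α` times the inequality for `ℓ1`. Conversely, it suffices to treat the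
set `T` of the `#S` largest entries in modulus, since replacing `S` by `T` can only increase
`J(z_S)` and decrease `J(z_{Sᶜ})`. With `m` the smallest nonzero modulus on `T`, monotonicity of
the slope gives `F(z_i) ≤ (F m / m) |z_i|` on `T` and the reverse inequality off `T`, so the
`ℓ1` inequality transfers to `J`.
-/

open Topology

section Rearrangement

variable {ι : Type*} [DecidableEq ι]

theorem Finset.exists_card_eq_forall_notMem_le [Fintype ι] (w : ι → ℝ) {k : ℕ}
    (hk : k ≤ Fintype.card ι) :
    ∃ T : Finset ι, T.card = k ∧ ∀ i ∈ T, ∀ j ∉ T, w j ≤ w i := by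
  induction k with
  | zero => exact ⟨∅, rfl, by simp⟩
  | succ k ih =>
    obtain ⟨T, hcard, htop⟩ := ih (Nat.le_of_succ_le hk)
    have hTc : Tᶜ.Nonempty := by
      rw [← Finset.card_pos, Finset.card_compl, hcard]
      omega
    obtain ⟨j, hjc, hjmax⟩ := Tᶜ.exists_max_image w hTc
    have hjT : j ∉ T := Finset.mem_compl.mp hjc
    refine ⟨insert j T, by rw [Finset.card_insert_of_notMem hjT, hcard], ?_⟩
    intro i hi j' hj'
    have hj'T : j' ∉ T := fun h => hj' (Finset.mem_insert_of_mem h)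
    rcases Finset.mem_insert.mp hi with rfl | hiT
    · exact hjmax j' (Finset.mem_compl.mpr hj'T)
    · exact htop i hiT j' hj'T

theorem Finset.sum_le_sum_of_card_eq {β : Type*} [AddCommMonoid β] [LinearOrder β]
    [IsOrderedAddMonoid β] (g : ι → β) {P Q : Finset ι} (hcard : P.card = Q.card)
    (h : ∀ i ∈ P \ Q, ∀ j ∈ Q \ P, g i ≤ g j) :
    ∑ i ∈ P, g i ≤ ∑ i ∈ Q, g i := by
  rw [← Finset.sum_inter_add_sum_sdiff P Q g, ← Finset.sum_inter_add_sum_sdiff Q P g,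
    Finset.inter_comm Q P]
  have hcd : (P \ Q).card = (Q \ P).card := by
    have h1 := Finset.card_inter_add_card_sdiff P Q
    have h2 := Finset.card_inter_add_card_sdiff Q P
    rw [Finset.inter_comm Q P] at h2
    omega
  refine add_le_add_right ?_ _
  rcases (Q \ P).eq_empty_or_nonempty with he | hne
  · rw [Finset.card_eq_zero.mp (hcd.trans (by rw [he, Finset.card_empty])), he]
  · obtain ⟨b, hb, hbmin⟩ := (Q \ P).exists_min_image g hne
    calc ∑ i ∈ P \ Q, g i ≤ (P \ Q).card • g b :=
          Finset.sum_le_card_nsmul _ _ _ fun i hi => h i hi b hb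
      _ = (Q \ P).card • g b := by rw [hcd]
      _ ≤ ∑ i ∈ Q \ P, g i := Finset.card_nsmul_le_sum _ _ _ hbmin

end Rearrangement

/-- The paper's `α = lim_{t → 0⁺} F t / t` (see `IsWCSM.tendsto_div_slopeAtZero`). -/
noncomputable def slopeAtZero (F : ℝ → ℝ) : ℝ := sSup ((fun t => F t / t) '' Ioi 0)

namespace IsWCSM

variable {F : ℝ → ℝ} {ρ : ℝ}

theorem apply_abs (hF : IsWCSM F ρ) (t : ℝ) : F |t| = F t := by
  rcases abs_cases t with ⟨h, _⟩ | ⟨h, _⟩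
  · rw [h]
  · rw [h, hF.even]

theorem nonneg (hF : IsWCSM F ρ) (t : ℝ) : 0 ≤ F t := by
  rw [← hF.apply_abs, ← hF.zero]
  exact hF.mono 0 |t| le_rfl (abs_nonneg t)

theorem div_le_apply_one_sub (hF : IsWCSM F ρ) {t : ℝ} (ht : 0 < t) : F t / t ≤ F 1 - ρ := by
  rcases le_or_gt t 1 with ht1 | ht1
  · have hw := hF.wconv 1 0 zero_le_one le_rfl t ht.le ht1
    simp only [mul_one, mul_zero, hF.zero, add_zero, sub_zero, one_pow] at hw
    rw [div_le_iff₀ ht]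
    nlinarith [mul_nonneg (neg_nonneg.mpr hF.rho_nonpos) (mul_self_nonneg t)]
  · have := hF.ratio_anti 1 t one_pos ht1.le
    rw [div_one] at this
    linarith [hF.rho_nonpos]

theorem bddAbove_div (hF : IsWCSM F ρ) : BddAbove ((fun t => F t / t) '' Ioi 0) := by
  refine ⟨F 1 - ρ, ?_⟩
  rintro _ ⟨t, ht, rfl⟩
  exact hF.div_le_apply_one_sub ht

theorem div_le_slopeAtZero (hF : IsWCSM F ρ) {t : ℝ} (ht : 0 < t) : F t / t ≤ slopeAtZero F :=
  le_csSup hF.bddAbove_div ⟨t, ht, rfl⟩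

theorem slopeAtZero_pos (hF : IsWCSM F ρ) : 0 < slopeAtZero F := by
  obtain ⟨t, ht⟩ := hF.nontrivial
  have ht0 : 0 < |t| := abs_pos.mpr fun h => ht (h ▸ hF.zero)
  have hFt : 0 < F |t| := (hF.nonneg |t|).lt_of_ne (by rw [hF.apply_abs]; exact Ne.symm ht)
  exact (div_pos hFt ht0).trans_le (hF.div_le_slopeAtZero ht0)

theorem tendsto_div_slopeAtZero (hF : IsWCSM F ρ) :
    Tendsto (fun t => F t / t) (𝓝[>] 0) (𝓝 (slopeAtZero F)) :=
  AntitoneOn.tendsto_nhdsGT (fun s hs t _ hst => hF.ratio_anti s t hs hst) hF.bddAbove_div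

theorem tendsto_apply_mul_div (hF : IsWCSM F ρ) (x : ℝ) :
    Tendsto (fun t => F (t * x) / t) (𝓝[>] 0) (𝓝 (slopeAtZero F * |x|)) := by
  rcases eq_or_ne x 0 with rfl | hx
  · simp [hF.zero]
  have hx' : 0 < |x| := abs_pos.mpr hx
  have hscale : Tendsto (fun t => t * |x|) (𝓝[>] 0) (𝓝[>] 0) := by
    refine tendsto_nhdsWithin_iff.mpr ⟨?_, ?_⟩
    · simpa using (continuous_mul_const |x|).continuousAt.tendsto.mono_left
        (nhdsWithin_le_nhds (s := Ioi (0 : ℝ)) (a := 0))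
    · filter_upwards [self_mem_nhdsWithin] with t ht using mul_pos ht hx'
  refine ((hF.tendsto_div_slopeAtZero.comp hscale).mul_const |x|).congr' ?_
  filter_upwards [self_mem_nhdsWithin] with t (ht : 0 < t)
  simp only [Function.comp_apply]
  rw [← hF.apply_abs (t * x), abs_mul, abs_of_pos ht]
  field_simp

theorem apply_le_div_mul_abs (hF : IsWCSM F ρ) {m u : ℝ} (hm : 0 < m) (hmu : m ≤ |u|) :
    F u ≤ F m / m * |u| := by
  have hu : 0 < |u| := hm.trans_le hmu
  have := hF.ratio_anti m |u| hm hmu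
  rwa [hF.apply_abs, div_le_iff₀ hu] at this

theorem div_mul_abs_le_apply (hF : IsWCSM F ρ) {m u : ℝ} (hum : |u| ≤ m) :
    F m / m * |u| ≤ F u := by
  rcases (abs_nonneg u).eq_or_lt with hu | hu
  · rw [← hF.apply_abs u, ← hu, mul_zero, hF.zero]
  have := hF.ratio_anti |u| m hu hum
  rwa [hF.apply_abs, le_div_iff₀ hu] at this

theorem apply_le_apply_of_abs_le (hF : IsWCSM F ρ) {s t : ℝ} (hst : |s| ≤ |t|) : F s ≤ F t := by
  rw [← hF.apply_abs s, ← hF.apply_abs t]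
  exact hF.mono _ _ (abs_nonneg s) hst

variable {ι : Type*} {z : ι → ℝ}

theorem sum_le_sum_of_card_eq [DecidableEq ι] (hF : IsWCSM F ρ) {S T : Finset ι}
    (hcard : S.card = T.card) (hT : ∀ i ∈ T, ∀ j ∉ T, |z j| ≤ |z i|) :
    ∑ i ∈ S, F (z i) ≤ ∑ i ∈ T, F (z i) :=
  Finset.sum_le_sum_of_card_eq _ hcard fun i hi j hj =>
    hF.apply_le_apply_of_abs_le (hT j (Finset.mem_sdiff.mp hj).1 i (Finset.mem_sdiff.mp hi).2)

theorem exists_separating_slope (hF : IsWCSM F ρ) {T U : Finset ι}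
    (hTU : ∀ i ∈ T, ∀ j ∈ U, |z j| ≤ |z i|) :
    ∃ c, 0 ≤ c ∧ (∀ i ∈ T, F (z i) ≤ c * |z i|) ∧ ∀ j ∈ U, c * |z j| ≤ F (z j) := by
  classical
  by_cases hT : ∃ i ∈ T, z i ≠ 0
  · obtain ⟨i₀, hi₀, hmin⟩ := (T.filter (z · ≠ 0)).exists_min_image (|z ·|) (by
      obtain ⟨i, hi, hzi⟩ := hT
      exact ⟨i, Finset.mem_filter.mpr ⟨hi, hzi⟩⟩)
    obtain ⟨hi₀T, hzi₀⟩ := Finset.mem_filter.mp hi₀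
    have hm : 0 < |z i₀| := abs_pos.mpr hzi₀
    refine ⟨F |z i₀| / |z i₀|, div_nonneg (hF.nonneg _) hm.le, fun i hi => ?_,
      fun j hj => hF.div_mul_abs_le_apply (hTU i₀ hi₀T j hj)⟩
    rcases eq_or_ne (z i) 0 with hzi | hzi
    · simp [hzi, hF.zero]
    · exact hF.apply_le_div_mul_abs hm (hmin i (Finset.mem_filter.mpr ⟨hi, hzi⟩))
  · push Not at hT
    exact ⟨0, le_rfl, fun i hi => by simp [hT i hi, hF.zero], fun j _ => by simp [hF.nonneg]⟩

theorem sum_le_mul_sum_of_abs (hF : IsWCSM F ρ) {T U : Finset ι} {γ : ℝ} (hγ : 0 ≤ γ)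
    (hTU : ∀ i ∈ T, ∀ j ∈ U, |z j| ≤ |z i|) (h : ∑ i ∈ T, |z i| ≤ γ * ∑ j ∈ U, |z j|) :
    ∑ i ∈ T, F (z i) ≤ γ * ∑ j ∈ U, F (z j) := by
  obtain ⟨c, hc, hcT, hcU⟩ := hF.exists_separating_slope hTU
  calc ∑ i ∈ T, F (z i) ≤ c * ∑ i ∈ T, |z i| := by
        rw [Finset.mul_sum]; exact Finset.sum_le_sum hcT
    _ ≤ c * (γ * ∑ j ∈ U, |z j|) := mul_le_mul_of_nonneg_left h hc
    _ = γ * (c * ∑ j ∈ U, |z j|) := by ring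
    _ ≤ γ * ∑ j ∈ U, F (z j) := by
        rw [Finset.mul_sum]; exact mul_le_mul_of_nonneg_left (Finset.sum_le_sum hcU) hγ

end IsWCSM

section NullSpace

variable {M N : ℕ} {A : Matrix (Fin M) (Fin N) ℝ} {K : ℕ} {γ : ℝ}

theorem sum_restr {G : ℝ → ℝ} (hG : G 0 = 0) (x : Fin N → ℝ) (S : Finset (Fin N)) :
    ∑ i, G (restr x S i) = ∑ i ∈ S, G (x i) := by
  simp only [restr, apply_ite G, hG, Finset.sum_ite_mem, Finset.univ_inter]

theorem nscBound_sum_iff {G : ℝ → ℝ} (hG : G 0 = 0) :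
    NSCBound (fun x => ∑ i, G (x i)) A K γ ↔ ∀ z, A.mulVec z = 0 → ∀ S : Finset (Fin N),
      S.card ≤ K → ∑ i ∈ S, G (z i) ≤ γ * ∑ i ∈ Sᶜ, G (z i) := by
  simp only [NSCBound, sum_restr hG]

theorem nscBound_l1_iff :
    NSCBound (fun x => l1 x) A K γ ↔ ∀ z, A.mulVec z = 0 → ∀ S : Finset (Fin N),
      S.card ≤ K → ∑ i ∈ S, |z i| ≤ γ * ∑ i ∈ Sᶜ, |z i| :=
  nscBound_sum_iff abs_zero

variable {F : ℝ → ℝ} {ρ : ℝ}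

theorem NSCBound.l1_of_sum (hF : IsWCSM F ρ) (h : NSCBound (fun x => ∑ i, F (x i)) A K γ) :
    NSCBound (fun x => l1 x) A K γ := by
  rw [nscBound_sum_iff hF.zero] at h
  rw [nscBound_l1_iff]
  intro z hz S hS
  have hlim : ∀ T : Finset (Fin N), Tendsto (fun t => ∑ i ∈ T, F (t * z i) / t) (𝓝[>] 0)
      (𝓝 (slopeAtZero F * ∑ i ∈ T, |z i|)) := fun T => by
    rw [Finset.mul_sum]
    exact tendsto_finsetSum _ fun i _ => hF.tendsto_apply_mul_div (z i)
  have hscaled : ∀ᶠ t in 𝓝[>] 0,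
      ∑ i ∈ S, F (t * z i) / t ≤ γ * ∑ i ∈ Sᶜ, F (t * z i) / t := by
    filter_upwards [self_mem_nhdsWithin] with t (ht : 0 < t)
    have := h (t • z) (by rw [Matrix.mulVec_smul, hz, smul_zero]) S hS
    simp only [Pi.smul_apply, smul_eq_mul] at this
    rw [← Finset.sum_div, ← Finset.sum_div, ← mul_div_assoc]
    exact div_le_div_of_nonneg_right this ht.le
  have hα := le_of_tendsto_of_tendsto (hlim S) ((hlim Sᶜ).const_mul γ) hscaled
  rw [mul_left_comm] at hα
  exact le_of_mul_le_mul_left hα hF.slopeAtZero_pos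

theorem NSCBound.of_l1 (hF : IsWCSM F ρ) (hγ : 0 ≤ γ) (h : NSCBound (fun x => l1 x) A K γ) :
    NSCBound (fun x => ∑ i, F (x i)) A K γ := by
  rw [nscBound_l1_iff] at h
  rw [nscBound_sum_iff hF.zero]
  intro z hz S hS
  obtain ⟨T, hTS, hT⟩ := Finset.exists_card_eq_forall_notMem_le (|z ·|)
    (Finset.card_le_univ S)
  have hST : ∑ i ∈ S, F (z i) ≤ ∑ i ∈ T, F (z i) := hF.sum_le_sum_of_card_eq hTS.symm hT
  have hTT : ∑ i ∈ T, F (z i) ≤ γ * ∑ i ∈ Tᶜ, F (z i) :=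
    hF.sum_le_mul_sum_of_abs hγ (fun i hi j hj => hT i hi j (Finset.mem_compl.mp hj))
      (h z hz T (hTS ▸ hS))
  -- both `S, Sᶜ` and `T, Tᶜ` split the same total `∑ i, F (z i)`
  have hTS' : ∑ i ∈ Tᶜ, F (z i) ≤ ∑ i ∈ Sᶜ, F (z i) := by
    linarith [Finset.sum_add_sum_compl S fun i => F (z i),
      Finset.sum_add_sum_compl T fun i => F (z i)]
  exact hST.trans (hTT.trans (mul_le_mul_of_nonneg_left hTS' hγ))

end NullSpace

theorem stmt3_general {M N : ℕ} (F : ℝ → ℝ) (ρ : ℝ) (hF : IsWCSM F ρ)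
    (A : Matrix (Fin M) (Fin N) ℝ) (K : ℕ) :
    (∀ γ : ℝ, 0 ≤ γ →
      (NSCBound (fun x => ∑ i, F (x i)) A K γ ↔ NSCBound (fun x => l1 x) A K γ)) ∧
    sInf {γ : ℝ | 0 ≤ γ ∧ NSCBound (fun x => ∑ i, F (x i)) A K γ} =
      sInf {γ : ℝ | 0 ≤ γ ∧ NSCBound (fun x => l1 x) A K γ} := by
  have hiff : ∀ γ : ℝ, 0 ≤ γ →
      (NSCBound (fun x => ∑ i, F (x i)) A K γ ↔ NSCBound (fun x => l1 x) A K γ) :=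
    fun _ hγ => ⟨NSCBound.l1_of_sum hF, NSCBound.of_l1 hF hγ⟩
  exact ⟨hiff, congrArg sInf (Set.ext fun γ => and_congr_right (hiff γ))⟩

/-- for a weakly convex sparseness measure `F`, a constant `γ ≥ 0` is a
null-space-constant bound for `J(x) = Σᵢ F(xᵢ)` iff it is one for the `ℓ1` norm;
consequently `γ(J, A, K) = γ(ℓ1, A, K)`. -/
theorem stmt3 {M N : ℕ} (hMN : M < N) (F : ℝ → ℝ) (ρ : ℝ) (hF : IsWCSM F ρ)
    (A : Matrix (Fin M) (Fin N) ℝ) (K : ℕ) (hK : 1 ≤ K) :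
    (∀ γ : ℝ, 0 ≤ γ →
      (NSCBound (fun x => ∑ i, F (x i)) A K γ ↔ NSCBound (fun x => l1 x) A K γ)) ∧
    sInf {γ : ℝ | 0 ≤ γ ∧ NSCBound (fun x => ∑ i, F (x i)) A K γ} =
      sInf {γ : ℝ | 0 ≤ γ ∧ NSCBound (fun x => l1 x) A K γ} :=
  stmt3_general F ρ hF A K
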